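/- arXiv:2010.06872 — 4 statements merged into one kernel-verified Lean document; each statement's English description precedes it below -/
import Mathlib

section
/- If H' is a Hopf subalgebra of a Hopf algebra H, then exp₀(H') divides exp₀(H) (with the convention that every positive integer divides ∞ and ∞ divides ∞). -/
/-!
In the convolution algebra `WithConv (H →ₗ[k] H)` the Sweedler power `[n]` is the `n`-th power of
`id` and `u ∘ ε` is the unit, so `exp₀(H)` is the order of `id` (read as `∞` when infinite). A
bialgebra morphism `f : H' → H` intertwines the powers, `f ∘ id^n = id^n ∘ f`, so when `f` is
injective every `n` with `id^n = 1` in `H` also has `id^n = 1` in `H'`; hence the order of `id` in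
`H'` divides that in `H`.
-/

open TensorProduct

noncomputable section

variable (k H : Type*) [CommRing k] [Ring H] [Bialgebra k H]

/-- Convolution product `f * g = m ∘ (f ⊗ g) ∘ Δ` on linear endomorphisms. -/
def conv (f g : Module.End k H) : Module.End k H :=
  LinearMap.mul' k H ∘ₗ TensorProduct.map f g ∘ₗ Coalgebra.comul

/-- The convolution unit `u ∘ ε`. -/
def convOne : Module.End k H := (Algebra.linearMap k H) ∘ₗ Coalgebra.counit

/-- `convSeq F n = m_n ∘ (F 0 ⊗ F 1 ⊗ ⋯ ⊗ F (n-1)) ∘ Δ_n` (as an iterated convolution). -/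
def convSeq : (ℕ → Module.End k H) → ℕ → Module.End k H
  | _, 0 => convOne k H
  | F, n + 1 => conv k H (F 0) (convSeq (fun j => F (j + 1)) n)

/-- The `n`-th Sweedler power `[n] = m_n ∘ Δ_n` as a linear endomorphism. -/
def sweedlerPow (n : ℕ) : Module.End k H := convSeq k H (fun _ => LinearMap.id) n

/-- The twisted Sweedler power `m_n ∘ (id ⊗ T ⊗ T² ⊗ ⋯ ⊗ T^(n-1)) ∘ Δ_n`. -/
def twistPow (T : Module.End k H) (n : ℕ) : Module.End k H :=
  convSeq k H (fun j => T ^ j) n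

/-- `exp₀(H)`: the least `n ≥ 1` with `[n] = u ∘ ε`, in `ℕ ∪ {∞}` (`sInf ∅ = ∞`). -/
def exp0 : ℕ∞ :=
  sInf {e : ℕ∞ | ∃ n : ℕ, e = n ∧ 0 < n ∧ sweedlerPow k H n = convOne k H}

/-- The `T`-twisted exponent: least `n ≥ 1` with
`m_n ∘ (id ⊗ T ⊗ ⋯ ⊗ T^(n-1)) ∘ Δ_n = u ∘ ε`, in `ℕ ∪ {∞}`.  For `T = S⁻²` this is
`exp(H)` and for `T = S^(2i)` this is the twisted exponent `exp_{2i}(H)`. -/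
def expAt (T : Module.End k H) : ℕ∞ :=
  sInf {e : ℕ∞ | ∃ n : ℕ, e = n ∧ 0 < n ∧ twistPow k H T n = convOne k H}

open WithConv LinearMap

section OrderOf

variable {M N : Type*} [Monoid M] [Monoid N]

/-- `orderOf x` valued in `ℕ∞`, with `⊤` rather than `0` for elements of infinite order. -/
def enatOrderOf (x : M) : ℕ∞ :=
  sInf {e : ℕ∞ | ∃ n : ℕ, e = n ∧ 0 < n ∧ x ^ n = 1}

lemma enatOrderOf_eq_orderOf {x : M} (hx : IsOfFinOrder x) : enatOrderOf x = orderOf x := by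
  refine le_antisymm (sInf_le ⟨orderOf x, rfl, hx.orderOf_pos, pow_orderOf_eq_one x⟩) ?_
  refine le_sInf ?_
  rintro _ ⟨n, rfl, hn, hxn⟩
  exact_mod_cast orderOf_le_of_pow_eq_one hn hxn

lemma enatOrderOf_eq_top {x : M} (hx : ¬IsOfFinOrder x) : enatOrderOf x = ⊤ := by
  rw [enatOrderOf, sInf_eq_top]
  rintro _ ⟨n, rfl, hn, hxn⟩
  exact absurd (isOfFinOrder_iff_pow_eq_one.mpr ⟨n, hn, hxn⟩) hx

lemma enatOrderOf_ne_zero (x : M) : enatOrderOf x ≠ 0 := by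
  by_cases hx : IsOfFinOrder x
  · simpa [enatOrderOf_eq_orderOf hx] using hx.orderOf_pos.ne'
  · simp [enatOrderOf_eq_top hx]

lemma enatOrderOf_dvd_of_pow_eq_one_imp {x : M} {y : N} (h : ∀ n, x ^ n = 1 → y ^ n = 1) :
    enatOrderOf y ∣ enatOrderOf x := by
  by_cases hx : IsOfFinOrder x
  · have hyx : y ^ orderOf x = 1 := h _ (pow_orderOf_eq_one x)
    have hy : IsOfFinOrder y := isOfFinOrder_iff_pow_eq_one.mpr ⟨_, hx.orderOf_pos, hyx⟩
    rw [enatOrderOf_eq_orderOf hx, enatOrderOf_eq_orderOf hy]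
    exact Nat.cast_dvd_cast (orderOf_dvd_of_pow_eq_one hyx)
  · rw [enatOrderOf_eq_top hx]
    exact ⟨⊤, (ENat.mul_top (enatOrderOf_ne_zero y)).symm⟩

end OrderOf

section Convolution

variable {R A B C D : Type*} [CommSemiring R] [Semiring A] [Algebra R A] [Semiring B] [Algebra R B]
  [AddCommMonoid C] [Module R C] [Coalgebra R C] [AddCommMonoid D] [Module R D] [Coalgebra R D]

lemma algHom_comp_convPow (h : A →ₐ[R] B) (x : WithConv (C →ₗ[R] A)) (n : ℕ) :
    h.toLinearMap ∘ₗ (x ^ n).ofConv = (toConv (h.toLinearMap ∘ₗ x.ofConv) ^ n).ofConv := by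
  induction n with
  | zero => ext; simp
  | succ n ih => rw [pow_succ, pow_succ, algHom_comp_convMul_distrib, ih]

lemma convPow_comp_coalgHom (x : WithConv (C →ₗ[R] A)) (g : D →ₗc[R] C) (n : ℕ) :
    (x ^ n).ofConv ∘ₗ g.toLinearMap = (toConv (x.ofConv ∘ₗ g.toLinearMap) ^ n).ofConv := by
  induction n with
  | zero => ext; simp
  | succ n ih => rw [pow_succ, pow_succ, convMul_comp_coalgHom_distrib, ih]

end Convolution

section SweedlerPow

variable {k H} {H' : Type*} [Ring H'] [Bialgebra k H']

lemma sweedlerPow_eq_ofConv_pow (n : ℕ) :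
    sweedlerPow k H n = (toConv (LinearMap.id : H →ₗ[k] H) ^ n).ofConv := by
  induction n with
  | zero => rfl
  | succ n ih =>
    change conv k H LinearMap.id (sweedlerPow k H n) = _
    rw [ih, pow_succ']
    rfl

lemma convOne_eq_ofConv_one : convOne k H = (1 : WithConv (H →ₗ[k] H)).ofConv := rfl

lemma exp0_eq_enatOrderOf : exp0 k H = enatOrderOf (toConv (LinearMap.id : H →ₗ[k] H)) := by
  simp only [exp0, enatOrderOf, sweedlerPow_eq_ofConv_pow, convOne_eq_ofConv_one,
    ← WithConv.ext_iff]

lemma BialgHom.comp_convPow_id (f : H' →ₐc[k] H) (n : ℕ) :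
    f.toLinearMap ∘ₗ (toConv (LinearMap.id : H' →ₗ[k] H') ^ n).ofConv =
      (toConv (LinearMap.id : H →ₗ[k] H) ^ n).ofConv ∘ₗ f.toLinearMap :=
  (algHom_comp_convPow (f : H' →ₐ[k] H) _ n).trans
    (convPow_comp_coalgHom (toConv LinearMap.id) (f : H' →ₗc[k] H) n).symm

lemma BialgHom.convPow_id_eq_one_of_injective (f : H' →ₐc[k] H) (hf : Function.Injective f)
    {n : ℕ} (hn : toConv (LinearMap.id : H →ₗ[k] H) ^ n = 1) :
    toConv (LinearMap.id : H' →ₗ[k] H') ^ n = 1 := by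
  apply ofConv_injective
  apply (LinearMap.cancel_left hf).mp
  rw [f.comp_convPow_id, hn]
  simpa using (f.comp_convPow_id 0).symm

end SweedlerPow

/-- A Hopf subalgebra is given by an injective bialgebra morphism `f : H' → H`; such a morphism
automatically commutes with the antipodes. -/
theorem stmt3 (k H H' : Type*) [Field k] [Ring H] [HopfAlgebra k H]
    [Ring H'] [HopfAlgebra k H']
    (f : H' →ₐc[k] H) (hf : Function.Injective f) :
    exp0 k H' ∣ exp0 k H := by
  rw [exp0_eq_enatOrderOf, exp0_eq_enatOrderOf]
  exact enatOrderOf_dvd_of_pow_eq_one_imp fun _ => f.convPow_id_eq_one_of_injective hf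
end
end

section
/- For Hopf algebras H and H' over a field k, exp₀(H ⊗ H') = lcm(exp₀(H), exp₀(H')), where the lcm with ∞ is ∞. -/
open TensorProduct

noncomputable section

variable (k H : Type*) [CommRing k] [Ring H] [Bialgebra k H]

universe u

/-!
`exp₀(H)` is the order of `id` in the convolution monoid of `End_k(H)`, counted as `∞` when the
order is infinite. On `H ⊗ H'` the `n`-th convolution power of `id` is the tensor product of the
`n`-th powers on `H` and `H'`, and slicing with the counits (using `[n](1) = 1`) shows that it is
`u ∘ ε` exactly when both factors are. Hence the natural numbers divisible by `exp₀(H ⊗ H')` are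
the common multiples of `exp₀(H)` and `exp₀(H')`, and in `ℕ∞` a nonzero element is determined up
to divisibility by its natural multiples.
-/

open WithConv
open scoped RingTheory.LinearMap

namespace ENat

theorem natCast_dvd_natCast_iff {a b : ℕ} : (a : ℕ∞) ∣ b ↔ a ∣ b := by
  refine ⟨fun ⟨c, hc⟩ => ?_, Nat.cast_dvd_cast⟩
  induction c using ENat.recTopCoe with
  | top =>
    rcases eq_or_ne a 0 with rfl | ha
    · simp_all
    · simp [ENat.mul_top (Nat.cast_ne_zero.2 ha)] at hc
  | coe c => exact ⟨c, by exact_mod_cast hc⟩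

theorem top_dvd_natCast_iff {n : ℕ} : (⊤ : ℕ∞) ∣ n ↔ n = 0 := by
  refine ⟨fun ⟨c, hc⟩ => ?_, fun h => h ▸ dvd_zero ⊤⟩
  rcases eq_or_ne c 0 with rfl | hc0
  · simpa using hc
  · simp [ENat.top_mul hc0] at hc

theorem dvd_top {x : ℕ∞} (hx : x ≠ 0) : x ∣ ⊤ := ⟨⊤, (ENat.mul_top hx).symm⟩

theorem dvd_of_forall_natCast_dvd {x y : ℕ∞} (hx : x ≠ 0) (h : ∀ n : ℕ, y ∣ n → x ∣ n) :
    x ∣ y := by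
  induction y using ENat.recTopCoe with
  | top => exact dvd_top hx
  | coe b => exact h b dvd_rfl

end ENat

def orderOfENat {M : Type*} [Monoid M] (x : M) : ℕ∞ :=
  sInf {e : ℕ∞ | ∃ m : ℕ, e = m ∧ 0 < m ∧ x ^ m = 1}

section OrderOfENat

variable {M : Type*} [Monoid M] {x : M}

theorem IsOfFinOrder.orderOfENat_eq (hx : IsOfFinOrder x) : orderOfENat x = orderOf x := by
  refine le_antisymm (sInf_le ⟨_, rfl, hx.orderOf_pos, pow_orderOf_eq_one x⟩) (le_sInf ?_)
  rintro _ ⟨m, rfl, hm, hxm⟩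
  exact_mod_cast orderOf_le_of_pow_eq_one hm hxm

theorem orderOfENat_eq_top (hx : ¬IsOfFinOrder x) : orderOfENat x = ⊤ := by
  refine sInf_eq_top.2 ?_
  rintro _ ⟨m, rfl, hm, hxm⟩
  exact absurd (isOfFinOrder_iff_pow_eq_one.2 ⟨m, hm, hxm⟩) hx

theorem orderOfENat_dvd_natCast_iff (n : ℕ) : orderOfENat x ∣ n ↔ x ^ n = 1 := by
  by_cases hx : IsOfFinOrder x
  · rw [hx.orderOfENat_eq, ENat.natCast_dvd_natCast_iff, orderOf_dvd_iff_pow_eq_one]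
  · rw [orderOfENat_eq_top hx, ENat.top_dvd_natCast_iff, ← orderOf_dvd_iff_pow_eq_one,
      orderOf_eq_zero_iff.2 hx, zero_dvd_iff]

theorem orderOfENat_ne_zero : orderOfENat x ≠ 0 := by
  by_cases hx : IsOfFinOrder x
  · simpa [hx.orderOfENat_eq] using hx.orderOf_pos.ne'
  · simp [orderOfENat_eq_top hx]

end OrderOfENat

theorem toConv_sweedlerPow (n : ℕ) :
    toConv (sweedlerPow k H n) = toConv LinearMap.id ^ n := by
  induction n with
  | zero => rfl
  | succ n ih => rw [pow_succ', ← ih]; rfl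

theorem sweedlerPow_eq_convOne_iff (n : ℕ) :
    sweedlerPow k H n = convOne k H ↔ toConv (LinearMap.id : Module.End k H) ^ n = 1 :=
  toConv_sweedlerPow k H n ▸ toConv_injective.eq_iff.symm

theorem exp0_eq_orderOfENat :
    exp0 k H = orderOfENat (toConv (LinearMap.id : Module.End k H)) := by
  simp only [exp0, orderOfENat, sweedlerPow_eq_convOne_iff]

theorem exp0_ne_zero : exp0 k H ≠ 0 := exp0_eq_orderOfENat k H ▸ orderOfENat_ne_zero

section ConvApplyOne

variable {k H} {A : Type*} [Ring A] [Algebra k A]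

theorem convMul_apply_one (f g : WithConv (H →ₗ[k] A)) : (f * g) 1 = f 1 * g 1 := by
  simp [Bialgebra.comul_one, Algebra.TensorProduct.one_def]

theorem convPow_apply_one (f : WithConv (H →ₗ[k] A)) (n : ℕ) : (f ^ n) 1 = f 1 ^ n := by
  induction n with
  | zero => simp
  | succ n ih => rw [pow_succ, convMul_apply_one, ih, pow_succ]

end ConvApplyOne

section TensorProduct

variable (H' : Type*) [Ring H'] [Bialgebra k H']

theorem convOne_tensorProduct : (1 : WithConv (H ⊗[k] H' →ₗ[k] H ⊗[k] H')) =
    toConv ((1 : WithConv (H →ₗ[k] H)).ofConv ⊗ₘ (1 : WithConv (H' →ₗ[k] H')).ofConv) := by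
  refine WithConv.ext (TensorProduct.ext' fun x y => ?_)
  simp only [ofConv_toConv, TensorProduct.map_tmul, LinearMap.convOne_def, LinearMap.comp_apply,
    TensorProduct.counit_tmul, Algebra.linearMap_apply, Algebra.algebraMap_eq_smul_one,
    Algebra.TensorProduct.one_def, smul_tmul', smul_tmul, smul_smul, smul_eq_mul, mul_comm]

theorem id_convPow_tensorProduct (n : ℕ) :
    toConv (LinearMap.id : Module.End k (H ⊗[k] H')) ^ n =
      toConv ((toConv (LinearMap.id : Module.End k H) ^ n).ofConv ⊗ₘ
        (toConv (LinearMap.id : Module.End k H') ^ n).ofConv) := by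
  induction n with
  | zero => exact convOne_tensorProduct k H H'
  | succ n ih =>
    rw [pow_succ, ih, ← TensorProduct.map_id, TensorProduct.map_convMul_map, pow_succ, pow_succ]

variable {H H'} in
theorem toConv_map_eq_one_iff {f : WithConv (Module.End k H)} {g : WithConv (Module.End k H')}
    (hf : f 1 = 1) (hg : g 1 = 1) :
    toConv (f.ofConv ⊗ₘ g.ofConv) = 1 ↔ f = 1 ∧ g = 1 := by
  refine ⟨fun h => ⟨?_, ?_⟩, fun ⟨hf, hg⟩ => by rw [hf, hg, convOne_tensorProduct]⟩
  · ext x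
    have := congr(TensorProduct.rid k H (LinearMap.lTensor H (Coalgebra.counit (R := k) (A := H'))
      (($h) (x ⊗ₜ 1))))
    simpa [hg] using this
  · ext y
    have := congr(TensorProduct.lid k H' (LinearMap.rTensor H' (Coalgebra.counit (R := k) (A := H))
      (($h) (1 ⊗ₜ y))))
    simpa [hf, Algebra.TensorProduct.one_def, Algebra.algebraMap_eq_smul_one] using this

theorem id_convPow_tensorProduct_eq_one_iff (n : ℕ) :
    toConv (LinearMap.id : Module.End k (H ⊗[k] H')) ^ n = 1 ↔
      toConv (LinearMap.id : Module.End k H) ^ n = 1 ∧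
        toConv (LinearMap.id : Module.End k H') ^ n = 1 := by
  rw [id_convPow_tensorProduct, toConv_map_eq_one_iff] <;> simp [convPow_apply_one]

theorem exp0_tensorProduct_dvd_natCast_iff (n : ℕ) :
    exp0 k (H ⊗[k] H') ∣ n ↔ exp0 k H ∣ n ∧ exp0 k H' ∣ n := by
  simp only [exp0_eq_orderOfENat, orderOfENat_dvd_natCast_iff,
    id_convPow_tensorProduct_eq_one_iff]

end TensorProduct

/-- `exp₀(H ⊗ H')` is the least common multiple of `exp₀(H)` and `exp₀(H')`
(in the divisibility order on `ℕ ∪ {∞}`, where `lcm` with `∞` is `∞`). -/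
theorem stmt5 (k H H' : Type u) [Field k] [Ring H] [HopfAlgebra k H]
    [Ring H'] [HopfAlgebra k H'] :
    exp0 k H ∣ exp0 k (H ⊗[k] H') ∧ exp0 k H' ∣ exp0 k (H ⊗[k] H') ∧
      ∀ m : ℕ∞, exp0 k H ∣ m → exp0 k H' ∣ m → exp0 k (H ⊗[k] H') ∣ m := by
  have tensor_dvd_iff := exp0_tensorProduct_dvd_natCast_iff k H H'
  refine ⟨?_, ?_, fun m hH hH' => ?_⟩
  · exact ENat.dvd_of_forall_natCast_dvd (exp0_ne_zero k H) fun n hn =>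
      ((tensor_dvd_iff n).1 hn).1
  · exact ENat.dvd_of_forall_natCast_dvd (exp0_ne_zero k H') fun n hn =>
      ((tensor_dvd_iff n).1 hn).2
  · exact ENat.dvd_of_forall_natCast_dvd (exp0_ne_zero k _) fun n hn =>
      (tensor_dvd_iff n).2 ⟨hH.trans hn, hH'.trans hn⟩
end
end

section
/- For a finite-dimensional Hopf algebra H, exp₀(H*) = exp₀(H), where H* is the dual Hopf algebra. -/
open TensorProduct

noncomputable section

variable (k H : Type*) [CommRing k] [Ring H] [Bialgebra k H]

/-- `IsDualHopf p` says that the Hopf algebra `Hd`, via the linear isomorphism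
`p : Hd ≃ₗ[k] H* = Hom_k(H, k)`, carries exactly the Hopf algebra structure dual to that of
`H`: multiplication is dual to `Δ_H`, the unit is `ε_H`, comultiplication is dual to `m_H`
(expressed by pairing against arbitrary `a, b ∈ H`), and the counit is evaluation at `1`. -/
structure IsDualHopf (k H Hd : Type*) [CommRing k] [Ring H] [Bialgebra k H]
    [Ring Hd] [Bialgebra k Hd] (p : Hd ≃ₗ[k] Module.Dual k H) : Prop where
  mul_def : ∀ x y : Hd, ∀ a : H,
    p (x * y) a = TensorProduct.lid k k (TensorProduct.map (p x) (p y) (Coalgebra.comul a))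
  one_def : p 1 = Coalgebra.counit (R := k)
  comul_def : ∀ x : Hd, ∀ a b : H,
    TensorProduct.lid k k
      (TensorProduct.map (Module.Dual.eval k H a) (Module.Dual.eval k H b)
        (TensorProduct.map p.toLinearMap p.toLinearMap (Coalgebra.comul x))) = p x (a * b)
  counit_def : ∀ x : Hd, Coalgebra.counit (R := k) x = p x 1

section Aux

variable {k H Hd : Type*} [Field k] [Ring H] [HopfAlgebra k H]
  [Ring Hd] [HopfAlgebra k Hd] (p : Hd ≃ₗ[k] Module.Dual k H) (hp : IsDualHopf k H Hd p)

lemma convOne_pair (hp : IsDualHopf k H Hd p) (x : Hd) (a : H) :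
    p (convOne k Hd x) a = p x (convOne k H a) := by
  have h1 : convOne k Hd x = algebraMap k Hd (Coalgebra.counit x) := rfl
  have h2 : convOne k H a = algebraMap k H (Coalgebra.counit a) := rfl
  rw [h1, h2, Algebra.algebraMap_eq_smul_one, Algebra.algebraMap_eq_smul_one,
    map_smul, map_smul, hp.one_def, hp.counit_def x]
  simp [smul_eq_mul, mul_comm]

lemma conv_pair (hp : IsDualHopf k H Hd p) (F : Module.End k Hd) (G : Module.End k H)
    (h : ∀ x a, p (F x) a = p x (G a)) (x : Hd) (a : H) :
    p (conv k Hd LinearMap.id F x) a = p x (conv k H LinearMap.id G a) := by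
  set M : Hd ⊗[k] Hd → H ⊗[k] H → k := fun s t =>
    TensorProduct.dualDistrib k H H
      (TensorProduct.map p.toLinearMap p.toLinearMap s) t with hM
  have stepA : ∀ s : Hd ⊗[k] Hd,
      p (LinearMap.mul' k Hd (TensorProduct.map LinearMap.id F s)) a
        = M s (TensorProduct.map LinearMap.id G (Coalgebra.comul a)) := by
    intro s
    induction s using TensorProduct.induction_on with
    | zero => simp [hM]
    | add u v hu hv => simp only [map_add, LinearMap.add_apply, hu, hv, hM]
    | tmul x₁ x₂ =>
      rw [TensorProduct.map_tmul, LinearMap.mul'_apply, LinearMap.id_apply, hp.mul_def]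
      have inner : ∀ c : H ⊗[k] H,
          TensorProduct.lid k k (TensorProduct.map (p x₁) (p (F x₂)) c)
            = M (x₁ ⊗ₜ x₂) (TensorProduct.map LinearMap.id G c) := by
        intro c
        induction c using TensorProduct.induction_on with
        | zero => simp [hM]
        | add u v hu hv => simp only [map_add, LinearMap.add_apply, hu, hv, hM]
        | tmul a₁ a₂ =>
          simp [hM, TensorProduct.dualDistrib_apply, h x₂ a₂]
      exact inner _
  have stepB : ∀ d : H ⊗[k] H,
      p x (LinearMap.mul' k H d) = M (Coalgebra.comul x) d := by
    intro d
    induction d using TensorProduct.induction_on with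
    | zero => simp [hM]
    | add u v hu hv => simp only [map_add, hu, hv, hM]
    | tmul b₁ b₂ =>
      rw [LinearMap.mul'_apply, ← hp.comul_def x b₁ b₂]
      have inner : ∀ t : Module.Dual k H ⊗[k] Module.Dual k H,
          TensorProduct.lid k k (TensorProduct.map (Module.Dual.eval k H b₁)
            (Module.Dual.eval k H b₂) t)
            = TensorProduct.dualDistrib k H H t (b₁ ⊗ₜ[k] b₂) := by
        intro t
        induction t using TensorProduct.induction_on with
        | zero => simp
        | add u v hu hv => simp only [map_add, LinearMap.add_apply, hu, hv]
        | tmul f g => simp [TensorProduct.dualDistrib_apply]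
      exact inner _
  have e1 : conv k Hd LinearMap.id F x
      = LinearMap.mul' k Hd (TensorProduct.map LinearMap.id F (Coalgebra.comul x)) := rfl
  have e2 : conv k H LinearMap.id G a
      = LinearMap.mul' k H (TensorProduct.map LinearMap.id G (Coalgebra.comul a)) := rfl
  rw [e1, e2, stepA, stepB]

lemma sweedler_pair (hp : IsDualHopf k H Hd p) : ∀ (n : ℕ) (x : Hd) (a : H),
    p (sweedlerPow k Hd n x) a = p x (sweedlerPow k H n a)
  | 0, x, a => convOne_pair p hp x a
  | n+1, x, a => conv_pair p hp _ _ (fun x a => sweedler_pair hp n x a) x a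

end Aux

/-- for a finite-dimensional Hopf algebra `H`, `exp₀(H*) = exp₀(H)`. -/
theorem stmt6 (k H Hd : Type*) [Field k] [Ring H] [HopfAlgebra k H] [FiniteDimensional k H]
    [Ring Hd] [HopfAlgebra k Hd] (p : Hd ≃ₗ[k] Module.Dual k H)
    (hp : IsDualHopf k H Hd p) :
    exp0 k Hd = exp0 k H := by
  have key : ∀ n : ℕ, sweedlerPow k Hd n = convOne k Hd ↔ sweedlerPow k H n = convOne k H := by
    intro n
    constructor
    · intro hsw
      ext a
      rw [← sub_eq_zero, ← Module.forall_dual_apply_eq_zero_iff k]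
      intro φ
      obtain ⟨x, rfl⟩ := p.surjective φ
      have := sweedler_pair p hp n x a
      rw [hsw] at this
      rw [LinearMap.map_sub, ← this, convOne_pair p hp, sub_self]
    · intro hsw
      ext x
      apply p.injective
      apply LinearMap.ext
      intro a
      rw [sweedler_pair p hp n x a, hsw, convOne_pair p hp]
  unfold exp0
  congr 1
  ext e
  simp only [Set.mem_setOf_eq]
  constructor <;> rintro ⟨n, rfl, hn, hsw⟩
  · exact ⟨n, rfl, hn, (key n).mp hsw⟩
  · exact ⟨n, rfl, hn, (key n).mpr hsw⟩
end
end

section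
/- Let H be a Hopf algebra, g ∈ H a grouplike element, and φ : H → H the inner automorphism h ↦ g h g^{-1}. Then for each n ≥ 1 and all h ∈ H, the n-th Sweedler power satisfies (hg)^{[n]} = Σ h₍₁₎ φ(h₍₂₎) ⋯ φ^{n-1}(h₍ₙ₎) gⁿ. -/
open TensorProduct

noncomputable section

variable (k H : Type*) [CommRing k] [Ring H] [Bialgebra k H]

section Aux

variable {k H : Type*} [CommRing k] [Ring H] [Bialgebra k H]

lemma conv_apply' (f g : Module.End k H) (x : H) :
    conv k H f g x = LinearMap.mul' k H (TensorProduct.map f g (Coalgebra.comul x)) := rfl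

lemma convOne_apply' (x : H) :
    convOne k H x = algebraMap k H (Coalgebra.counit x) := rfl

lemma psi_mul (g g' : H) (hg'g : g' * g = 1) (ψ : Module.End k H)
    (hψ : ∀ x : H, ψ x = g * x * g') (u v : H) : ψ (u * v) = ψ u * ψ v := by
  simp only [hψ, mul_assoc]
  rw [← mul_assoc g' g, hg'g, one_mul]

lemma conj_convSeq (g g' : H) (hgg' : g * g' = 1) (hg'g : g' * g = 1) (ψ : Module.End k H)
    (hψ : ∀ x : H, ψ x = g * x * g') :
    ∀ (n : ℕ) (F : ℕ → Module.End k H) (x : H),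
      ψ (convSeq k H F n x) = convSeq k H (fun j => ψ ∘ₗ F j) n x := by
  intro n
  induction n with
  | zero =>
    intro F x
    show ψ (convOne k H x) = convOne k H x
    rw [convOne_apply', hψ, ← Algebra.commutes (Coalgebra.counit x) g, mul_assoc, hgg',
      mul_one]
  | succ n ih =>
    intro F x
    show ψ (conv k H (F 0) (convSeq k H (fun j => F (j + 1)) n) x)
      = conv k H (ψ ∘ₗ F 0) (convSeq k H (fun j => ψ ∘ₗ F (j + 1)) n) x
    rw [conv_apply', conv_apply']
    induction Coalgebra.comul (R := k) x with
    | zero => simp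
    | tmul a b =>
      simp only [TensorProduct.map_tmul, LinearMap.mul'_apply, LinearMap.comp_apply]
      rw [psi_mul g g' hg'g ψ hψ, ih]
    | add y z hy hz => simp [hy, hz]

end Aux
/-- if `g ∈ H` is grouplike with inverse `g'` and `φ(x) = g x g'` is the
corresponding inner automorphism, then for every `n ≥ 1` and `h ∈ H`,
`(hg)^{[n]} = Σ h₁ φ(h₂) ⋯ φ^{n-1}(hₙ) gⁿ`; the right-hand Sweedler sum is
`m_n ∘ (id ⊗ φ ⊗ ⋯ ⊗ φ^{n-1}) ∘ Δ_n` applied to `h`. -/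

theorem stmt10 (k H : Type*) [Field k] [Ring H] [HopfAlgebra k H]
    (g g' : H)
    (hgrp : Coalgebra.comul (R := k) g = g ⊗ₜ[k] g)
    (hcou : Coalgebra.counit (R := k) g = 1)
    (hgg' : g * g' = 1) (hg'g : g' * g = 1)
    (φ : Module.End k H) (hφ : ∀ x : H, φ x = g * x * g') :
    ∀ n : ℕ, 0 < n → ∀ h : H,
      sweedlerPow k H n (h * g) = (convSeq k H (fun j => φ ^ j) n) h * g ^ n := by
  have main : ∀ (n : ℕ) (h : H),
      sweedlerPow k H n (h * g) = (convSeq k H (fun j => φ ^ j) n) h * g ^ n := by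
    intro n
    induction n with
    | zero =>
      intro h
      show convOne k H (h * g) = convOne k H h * g ^ 0
      rw [convOne_apply', convOne_apply', Bialgebra.counit_mul, hcou, mul_one, pow_zero,
        mul_one]
    | succ n ih =>
      intro h
      show conv k H LinearMap.id (sweedlerPow k H n) (h * g)
        = conv k H (φ ^ 0) (convSeq k H (fun j => φ ^ (j + 1)) n) h * g ^ (n + 1)
      rw [conv_apply', conv_apply', Bialgebra.comul_mul, hgrp]
      induction Coalgebra.comul (R := k) h with
      | zero => simp
      | tmul a b =>
        rw [Algebra.TensorProduct.tmul_mul_tmul]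
        simp only [TensorProduct.map_tmul, LinearMap.mul'_apply, LinearMap.id_coe, id_eq,
          pow_zero, Module.End.one_apply]
        rw [ih b]
        have hC : convSeq k H (fun j => φ ^ (j + 1)) n b
            = g * convSeq k H (fun j => φ ^ j) n b * g' := by
          have := conj_convSeq g g' hgg' hg'g φ hφ n (fun j => φ ^ j) b
          have he : (fun j => φ ^ (j + 1)) = (fun j => φ ∘ₗ φ ^ j) := by
            funext j; rw [pow_succ' φ j]; rfl
          rw [← hφ, this, he]
        rw [hC, pow_succ' g n]
        simp only [mul_assoc]
        rw [← mul_assoc g' g, hg'g, one_mul]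
      | add y z hy hz => simp only [map_add, add_mul, hy, hz]
  exact fun n _ h => main n h
end
end
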